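/- Let q = 3^m with m ≥ 3 odd and Tr the trace to GF(3). The set of minimum-weight codewords of the code C(m,3) equals { ±(Tr((a x + b)^2) + h)_{x ∈ GF(q)} : (a,b) ∈ GF(q)* × GF(q) }, where h ∈ GF(3) is the unique element such that (Tr(x^2) + h)_{x ∈ GF(q)} has minimum weight. -/

import Mathlib

/-!
If `a ≠ 0`, completing the square writes `Tr(a x² + b x) + u` as `±(Tr((s x + r)²) + v)`: since
`m` is odd, `-1` is a non-square in `GF(3^m)`, so `a = ±s²`. Weights are invariant under
`x ↦ s x + r` and under multiplication by `±1`, so such a word has weight `d` iff `Tr(x²) + v`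
does. The quadratic character sums to zero on the (negation-stable) kernel of the trace, hence
`Tr(x²)` vanishes at exactly `q/3` points; with the other two fibres this leaves at most one shift
`v` whose weight differs from `2q/3`, so `v = h`. For `a = 0` the word is affine and its weight is
`0`, `q` or `2q/3`, never `d`.
-/

open Finset

section Hamming

variable {ι κ β : Type*} [Fintype ι] [Zero β] [DecidableEq β]

theorem hammingNorm_add_card_filter_eq_zero (c : ι → β) :
    hammingNorm c + #{i | c i = 0} = Fintype.card ι := by
  rw [add_comm]
  exact card_filter_add_card_filter_not _

theorem hammingNorm_comp_equiv [Fintype κ] (c : ι → β) (σ : κ ≃ ι) :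
    hammingNorm (fun k => c (σ k)) = hammingNorm c :=
  card_equiv σ (by simp)

end Hamming

theorem card_mul_card_fiber_of_surjective {G A Φ : Type*} [AddGroup G] [Fintype G] [AddMonoid A]
    [Fintype A] [DecidableEq A] [FunLike Φ G A] [AddMonoidHomClass Φ G A] (L : Φ)
    (hL : Function.Surjective L) (a : A) :
    Fintype.card A * #{x | L x = a} = Fintype.card G := by
  rw [← card_univ (α := G), card_eq_sum_card_fiberwise (s := univ) (t := univ) (f := L) (by simp),
    sum_const_nat fun b _ => ?_, card_univ]
  simpa using AddMonoidHom.card_fiber_eq_of_mem_range L (hL b) (hL a)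

/-- With `n w` the number of zeros of `f + w`, the weight of `f + w` is `|X| - n w`, and
`n 0 + n 1 + n 2 = |X| = 3 n 0`; two distinct shifts with equal `n` force `3 n u = |X|`. -/
theorem three_mul_hammingNorm_add_const_of_ne {X : Type*} [Fintype X] (f : X → ZMod 3)
    (hf : 3 * #{x | f x = 0} = Fintype.card X) {u v : ZMod 3} (huv : u ≠ v)
    (hw : hammingNorm (fun x => f x + u) = hammingNorm (fun x => f x + v)) :
    3 * hammingNorm (fun x => f x + u) = 2 * Fintype.card X := by
  have hfibre (w : ZMod 3) :
      hammingNorm (fun x => f x + w) + #{x | f x + w = 0} = Fintype.card X :=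
    hammingNorm_add_card_filter_eq_zero _
  have hsum : #{x | f x + 0 = 0} + #{x | f x + 1 = 0} + #{x | f x + 2 = 0} = Fintype.card X := by
    have := card_eq_sum_card_fiberwise (s := univ) (t := univ) (f := (-f ·)) (by simp)
    rw [card_univ, show (univ : Finset (ZMod 3)) = {0, 1, 2} by decide, sum_insert (by decide),
      sum_insert (by decide), sum_singleton, ← add_assoc] at this
    simpa only [neg_eq_iff_eq_neg, add_eq_zero_iff_eq_neg, filter_univ_mem] using this.symm
  have h0 := hfibre 0
  have h1 := hfibre 1
  have h2 := hfibre 2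
  have cases : ∀ w : ZMod 3, w = 0 ∨ w = 1 ∨ w = 2 := by decide
  rcases cases u with rfl | rfl | rfl <;> rcases cases v with rfl | rfl | rfl <;>
    first | exact absurd rfl huv | (simp only [add_zero] at *; omega)

section FiniteField

variable {F : Type*} [Field F] [Fintype F]

theorem FiniteField.not_isSquare_neg_one_of_card_eq_three_pow {m : ℕ} (hm : Odd m)
    (hF : Fintype.card F = 3 ^ m) : ¬IsSquare (-1 : F) := by
  obtain ⟨k, rfl⟩ := hm
  rw [FiniteField.isSquare_neg_one_iff, hF, not_not, pow_succ, pow_mul, Nat.mul_mod, Nat.pow_mod]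
  norm_num

theorem FiniteField.quadraticChar_neg [DecidableEq F] (h : ¬IsSquare (-1 : F)) (a : F) :
    quadraticChar F (-a) = -quadraticChar F a := by
  rw [neg_eq_neg_one_mul a, map_mul, quadraticChar_neg_one_iff_not_isSquare.2 h, neg_one_mul]

theorem FiniteField.isSquare_or_isSquare_neg (h : ¬IsSquare (-1 : F)) (a : F) :
    IsSquare a ∨ IsSquare (-a) := by
  classical
  by_cases ha : a = 0
  · exact .inl (ha ▸ IsSquare.zero)
  refine or_iff_not_imp_left.2 fun hsq => (quadraticChar_one_iff_isSquare (neg_ne_zero.2 ha)).1 ?_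
  rw [FiniteField.quadraticChar_neg h, quadraticChar_neg_one_iff_not_isSquare.2 hsq, neg_neg]

theorem FiniteField.sum_quadraticChar_filter_eq_zero [DecidableEq F] {A Φ : Type*} [AddGroup A]
    [DecidableEq A] [FunLike Φ F A] [AddMonoidHomClass Φ F A] (h : ¬IsSquare (-1 : F)) (L : Φ) :
    ∑ z with L z = 0, quadraticChar F z = 0 := by
  have hneg : ∑ z with L z = 0, quadraticChar F z = ∑ z with L z = 0, -quadraticChar F z :=
    sum_nbij' Neg.neg Neg.neg (by simp) (by simp) (by simp) (by simp) fun z _ => by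
      rw [FiniteField.quadraticChar_neg h, neg_neg]
  rw [sum_neg_distrib] at hneg
  linarith

theorem FiniteField.card_filter_sq_eq_zero {A Φ : Type*} [AddGroup A] [DecidableEq A]
    [FunLike Φ F A] [AddMonoidHomClass Φ F A] (h : ¬IsSquare (-1 : F)) (L : Φ) :
    #{x | L (x ^ 2) = 0} = #{z | L z = 0} := by
  classical
  have hF : ringChar F ≠ 2 := fun h2 => h (FiniteField.isSquare_of_char_two h2 _)
  have hfibres : #{x | L (x ^ 2) = 0} = ∑ z with L z = 0, #{x : F | x ^ 2 = z}.toFinset := by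
    rw [card_eq_sum_card_fiberwise (f := (· ^ 2)) (t := {z | L z = 0}) (by intro x; simp)]
    refine sum_congr rfl fun z hz => ?_
    congr 1
    ext x
    simp only [mem_filter, mem_univ, true_and, Set.mem_toFinset, Set.mem_ofPred_eq] at hz ⊢
    exact ⟨And.right, fun hx => ⟨hx ▸ hz, hx⟩⟩
  zify
  rw [hfibres, Nat.cast_sum, sum_congr rfl fun z _ => quadraticChar_card_sqrts hF z,
    sum_add_distrib, FiniteField.sum_quadraticChar_filter_eq_zero h L]
  simp

end FiniteField

theorem Algebra.trace_algebraMap_mul {K L : Type*} [CommRing K] [CommRing L] [Algebra K L]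
    (a : K) (x : L) : trace K L (algebraMap K L a * x) = a * trace K L x := by
  rw [← Algebra.smul_def, map_smul, smul_eq_mul]

def IsAffineWeight (q w : ℕ) : Prop := w = 0 ∨ w = q ∨ 3 * w = 2 * q

theorem not_isAffineWeight_three_pow {m : ℕ} (hm : 0 < m) :
    ¬IsAffineWeight (3 ^ m) (2 * 3 ^ (m - 1) - 3 ^ ((m - 1) / 2)) := by
  have hpos : 0 < 3 ^ ((m - 1) / 2) := by positivity
  have hle : 3 ^ ((m - 1) / 2) ≤ 3 ^ (m - 1) :=
    Nat.pow_le_pow_right (by norm_num) (Nat.div_le_self _ 2)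
  have hsucc : 3 ^ m = 3 * 3 ^ (m - 1) := by rw [← pow_succ']; congr 1; omega
  unfold IsAffineWeight
  omega

section Trace

variable {F : Type*} [Field F] [Fintype F] [Algebra (ZMod 3) F]

local notation "Tr" => Algebra.trace (ZMod 3) _

theorem three_mul_card_trace_eq (v : ZMod 3) : 3 * #{x : F | Tr x = v} = Fintype.card F := by
  simpa using card_mul_card_fiber_of_surjective _ (Algebra.trace_surjective (ZMod 3) F) v

theorem three_mul_card_trace_sq_eq_zero (h : ¬IsSquare (-1 : F)) :
    3 * #{x : F | Tr (x ^ 2) = 0} = Fintype.card F := by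
  rw [FiniteField.card_filter_sq_eq_zero h, three_mul_card_trace_eq]

theorem isAffineWeight_hammingNorm_trace_mul_add (b : F) (u : ZMod 3) :
    IsAffineWeight (Fintype.card F) (hammingNorm fun x => Tr (b * x) + u) := by
  rcases eq_or_ne b 0 with rfl | hb
  · rcases eq_or_ne u 0 with rfl | hu
    · left; simp [hammingNorm]
    · right; left; simp [hammingNorm, hu]
  right; right
  have hscale := hammingNorm_comp_equiv (fun y : F => Tr y + u) (Equiv.mulLeft₀ b hb)
  have hfibre := hammingNorm_add_card_filter_eq_zero (fun y : F => Tr y + u)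
  have hcard := three_mul_card_trace_eq (F := F) (-u)
  simp only [Equiv.mulLeft₀_apply, add_eq_zero_iff_eq_neg] at hscale hfibre
  omega

theorem eq_of_hammingNorm_trace_sq_add_eq (h : ¬IsSquare (-1 : F)) {u v : ZMod 3}
    (hw : hammingNorm (fun x : F => Tr (x ^ 2) + u) = hammingNorm (fun x : F => Tr (x ^ 2) + v))
    (hd : 3 * hammingNorm (fun x : F => Tr (x ^ 2) + u) ≠ 2 * Fintype.card F) : u = v :=
  by_contra fun huv =>
    hd (three_mul_hammingNorm_add_const_of_ne _ (three_mul_card_trace_sq_eq_zero h) huv hw)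

theorem hammingNorm_mul_trace_sq_affine {ε : ZMod 3} (hε : ε ≠ 0) {s : F} (hs : s ≠ 0) (r : F)
    (v : ZMod 3) :
    hammingNorm (fun x => ε * (Tr ((s * x + r) ^ 2) + v)) =
      hammingNorm fun x : F => Tr (x ^ 2) + v := by
  rw [hammingNorm_comp (fun _ c => ε * c) (fun _ => mul_right_injective₀ hε) (fun _ => mul_zero ε)
    (x := fun x => Tr ((s * x + r) ^ 2) + v)]
  exact hammingNorm_comp_equiv (fun y => Tr (y ^ 2) + v)
    ((Equiv.mulLeft₀ s hs).trans (Equiv.addRight r))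

theorem exists_sign_mul_sq (h : ¬IsSquare (-1 : F)) {a : F} (ha : a ≠ 0) :
    ∃ ε : ZMod 3, (ε = 1 ∨ ε = -1) ∧ ∃ s : F, s ≠ 0 ∧ a = algebraMap (ZMod 3) F ε * s ^ 2 := by
  rcases FiniteField.isSquare_or_isSquare_neg h a with ⟨s, hs⟩ | ⟨s, hs⟩
  · exact ⟨1, .inl rfl, s, by rintro rfl; simp_all, by rw [hs, map_one]; ring⟩
  · refine ⟨-1, .inr rfl, s, by rintro rfl; simp_all, ?_⟩
    rw [map_neg, map_one]
    linear_combination -hs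

theorem exists_trace_quadratic_eq_sign_mul (h : ¬IsSquare (-1 : F)) {a : F} (ha : a ≠ 0) (b : F)
    (u : ZMod 3) : ∃ ε : ZMod 3, (ε = 1 ∨ ε = -1) ∧ ∃ s r : F, s ≠ 0 ∧ ∃ v : ZMod 3,
      ∀ x, Tr (a * x ^ 2 + b * x) + u = ε * (Tr ((s * x + r) ^ 2) + v) := by
  obtain ⟨ε, hε, s, hs, rfl⟩ := exists_sign_mul_sq h ha
  set e := algebraMap (ZMod 3) F ε
  have hε2 : ε * ε = 1 := mul_self_eq_one_iff.2 hε
  have he2 : e * e = 1 := by rw [← map_mul, hε2, map_one]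
  have h2 : (2 : F) ≠ 0 := by
    rw [← map_ofNat (algebraMap (ZMod 3) F) 2]
    exact (map_ne_zero _).2 (by decide)
  set r := e * b / (2 * s)
  have hr : 2 * e * s * r = b := by
    simp only [r]
    field_simp
    linear_combination b * he2
  have hsq (x : F) : e * s ^ 2 * x ^ 2 + b * x = e * (s * x + r) ^ 2 - e * r ^ 2 := by
    linear_combination (-x) * hr
  refine ⟨ε, hε, s, r, hs, ε * u - Tr (r ^ 2), fun x => ?_⟩
  rw [hsq, map_sub, Algebra.trace_algebraMap_mul, Algebra.trace_algebraMap_mul]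
  linear_combination (-u) * hε2

end Trace

theorem min_weight_codewords_general (m : ℕ) (hmodd : Odd m)
    (F : Type) [Field F] [Fintype F] [Algebra (ZMod 3) F]
    (hF : Fintype.card F = 3 ^ m)
    (h : ZMod 3)
    (hh : (Finset.univ.filter fun x : F =>
        Algebra.trace (ZMod 3) F (x ^ 2) + h ≠ 0).card =
      2 * 3 ^ (m - 1) - 3 ^ ((m - 1) / 2)) :
    {c : F → ZMod 3 | (∃ a b : F, ∃ u : ZMod 3,
        c = fun x => Algebra.trace (ZMod 3) F (a * x ^ 2 + b * x) + u) ∧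
      (Finset.univ.filter fun x : F => c x ≠ 0).card =
        2 * 3 ^ (m - 1) - 3 ^ ((m - 1) / 2)} =
    {c : F → ZMod 3 | ∃ ε : ZMod 3, (ε = 1 ∨ ε = -1) ∧ ∃ a b : F, a ≠ 0 ∧
        c = fun x => ε * (Algebra.trace (ZMod 3) F ((a * x + b) ^ 2) + h)} := by
  have hsq := FiniteField.not_isSquare_neg_one_of_card_eq_three_pow hmodd hF
  have hd : ¬IsAffineWeight (Fintype.card F) (2 * 3 ^ (m - 1) - 3 ^ ((m - 1) / 2)) :=
    hF ▸ not_isAffineWeight_three_pow hmodd.pos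
  ext c
  constructor
  · rintro ⟨⟨a, b, u, rfl⟩, hwt⟩
    have ha : a ≠ 0 := by
      rintro rfl
      simp only [zero_mul, zero_add] at hwt
      exact hd (hwt ▸ isAffineWeight_hammingNorm_trace_mul_add b u)
    obtain ⟨ε, hε, s, r, hs, v, hform⟩ := exists_trace_quadratic_eq_sign_mul hsq ha b u
    have hwv : hammingNorm (fun x => Algebra.trace (ZMod 3) F (x ^ 2) + v) =
        hammingNorm (fun x => Algebra.trace (ZMod 3) F (x ^ 2) + h) := by
      rw [← hammingNorm_mul_trace_sq_affine (left_ne_zero_of_mul_eq_one (mul_self_eq_one_iff.2 hε))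
        hs r v, ← funext hform]
      exact hwt.trans hh.symm
    have hv : v = h :=
      eq_of_hammingNorm_trace_sq_add_eq hsq hwv fun h3 => hd (.inr (.inr (hwv.trans hh ▸ h3)))
    exact ⟨ε, hε, s, r, hs, funext fun x => hv ▸ hform x⟩
  · rintro ⟨ε, hε, a, b, ha, rfl⟩
    set e := algebraMap (ZMod 3) F ε
    refine ⟨⟨e * a ^ 2, e * (2 * a * b), ε * (Algebra.trace (ZMod 3) F (b ^ 2) + h),
      funext fun x => ?_⟩, (hammingNorm_mul_trace_sq_affine
        (left_ne_zero_of_mul_eq_one (mul_self_eq_one_iff.2 hε)) ha b h).trans hh⟩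
    rw [show e * a ^ 2 * x ^ 2 + e * (2 * a * b) * x = e * (a * x + b) ^ 2 - e * b ^ 2 by ring,
      map_sub, Algebra.trace_algebraMap_mul, Algebra.trace_algebraMap_mul]
    ring

/-- for `m ≥ 3` odd and `h ∈ GF(3)` the (unique) element such that
`(Tr(x²) + h)_x` has minimum weight `d = 2·3^{m-1} - 3^{(m-1)/2}`, the set of
minimum-weight codewords of `C(m,3)` is
`{ ±(Tr((a x + b)²) + h)_x : a ∈ GF(q)*, b ∈ GF(q) }`. -/
theorem min_weight_codewords (m : ℕ) (hm : 3 ≤ m) (hmodd : Odd m)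
    (F : Type) [Field F] [Fintype F] [DecidableEq F] [Algebra (ZMod 3) F]
    (hF : Fintype.card F = 3 ^ m)
    (h : ZMod 3)
    (hh : (Finset.univ.filter fun x : F =>
        Algebra.trace (ZMod 3) F (x ^ 2) + h ≠ 0).card =
      2 * 3 ^ (m - 1) - 3 ^ ((m - 1) / 2)) :
    {c : F → ZMod 3 | (∃ a b : F, ∃ u : ZMod 3,
        c = fun x => Algebra.trace (ZMod 3) F (a * x ^ 2 + b * x) + u) ∧
      (Finset.univ.filter fun x : F => c x ≠ 0).card =
        2 * 3 ^ (m - 1) - 3 ^ ((m - 1) / 2)} =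
    {c : F → ZMod 3 | ∃ ε : ZMod 3, (ε = 1 ∨ ε = -1) ∧ ∃ a b : F, a ≠ 0 ∧
        c = fun x => ε * (Algebra.trace (ZMod 3) F ((a * x + b) ^ 2) + h)} :=
  min_weight_codewords_general m hmodd F hF h hh
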